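/- arXiv:math/0505240 — 3 statements merged into one kernel-verified Lean document; each statement's English description precedes it below -/
import Mathlib

section
/- Let b, d : ℝ≥0 → ℝ be continuous with b nonincreasing and d nondecreasing, let γ, ν, s ≥ 0, and suppose there exist a > 0 and m̄ ≥ 0 such that b(m) - d(m) - ν ≤ -a/2 for all m ≥ m̄. Let x : [0,∞) → ℝ≥0 solve x' = x·(b(x) - d(x) - γ - ν) + γ·s with x(0) ≥ 0. If s ≥ m̄·(a/2 + γ)/γ (with γ > 0), then limsup_{t→∞} x(t) ≤ γ·s/(γ + a/2). -/
open Filter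

theorem stmt_8 (b d : ℝ → ℝ) (γ ν s a mbar : ℝ)
    (hb : Continuous b) (hd : Continuous d)
    (hbmono : AntitoneOn b (Set.Ici (0:ℝ))) (hdmono : MonotoneOn d (Set.Ici (0:ℝ)))
    (hγ : 0 < γ) (hν : 0 ≤ ν) (hs : 0 ≤ s) (ha : 0 < a) (hmbar : 0 ≤ mbar)
    (hdecay : ∀ m ≥ mbar, b m - d m - ν ≤ -a/2)
    (x : ℝ → ℝ) (hxnn : ∀ t ≥ (0:ℝ), 0 ≤ x t)
    (hode : ∀ t ≥ (0:ℝ), HasDerivAt x (x t * (b (x t) - d (x t) - γ - ν) + γ * s) t)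
    (hslarge : mbar * (a/2 + γ) / γ ≤ s) :
    ∀ ε > (0:ℝ), ∀ᶠ t in atTop, x t ≤ γ * s / (γ + a/2) + ε := by
  intro ε hε
  set f' : ℝ → ℝ := fun t => x t * (b (x t) - d (x t) - γ - ν) + γ * s with hf'
  set M : ℝ := γ * s / (γ + a/2) with hMdef
  have hga : 0 < γ + a/2 := by linarith
  have hM : (γ + a/2) * M = γ * s := by
    rw [hMdef]; field_simp
  have hMnn : 0 ≤ M := by positivity
  have hmbarM : mbar ≤ M := by
    rw [div_le_iff₀ hγ] at hslarge
    rw [hMdef, le_div_iff₀ hga]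
    nlinarith
  set c : ℝ := (γ + a/2) * ε with hcdef
  have hc : 0 < c := by positivity
  set K : ℝ := M + ε with hKdef
  have hkey : ∀ t ≥ (0:ℝ), K ≤ x t → f' t ≤ -c := by
    intro t ht hxt
    have hxm : mbar ≤ x t := by
      have : mbar ≤ K := by rw [hKdef]; linarith
      linarith
    have hbd := hdecay (x t) hxm
    have h1 : x t * (b (x t) - d (x t) - γ - ν) ≤ x t * (-a/2 - γ) :=
      mul_le_mul_of_nonneg_left (by linarith) (hxnn t ht)
    have hxtK : M + ε ≤ x t := by rw [hKdef] at hxt; linarith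
    have h2 : x t * (-a/2 - γ) ≤ (M + ε) * (-a/2 - γ) := by
      apply mul_le_mul_of_nonpos_right hxtK (by linarith)
    simp only [hf']
    nlinarith
  have hcont : ContinuousOn x (Set.Ici (0:ℝ)) := fun t ht =>
    (hode t ht).continuousAt.continuousWithinAt
  -- Step A: x eventually drops below K
  have hA : ∃ t₀ ≥ (0:ℝ), x t₀ ≤ K := by
    by_contra h
    push_neg at h
    set T : ℝ := x 0 / c + 1 with hT
    have hT0 : 0 < T := by
      have := hxnn 0 le_rfl
      positivity
    obtain ⟨ξ, hξ, hderiv⟩ := exists_hasDerivAt_eq_slope x f' hT0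
      (hcont.mono (by
        intro y hy
        exact hy.1))
      (by
        intro y hy
        exact hode y hy.1.le)
    have hξ0 : (0:ℝ) ≤ ξ := hξ.1.le
    have hle : f' ξ ≤ -c := hkey ξ hξ0 (h ξ hξ0).le
    rw [hderiv] at hle
    have hxT : x T ≤ x 0 - c * T := by
      rw [div_le_iff₀ (by linarith : (0:ℝ) < T - 0)] at hle
      linarith
    have hxTnn := hxnn T hT0.le
    have : c * T = x 0 + c := by
      rw [hT]; field_simp
    linarith
  obtain ⟨t₀, ht₀, hxt₀⟩ := hA
  -- Step B: forward invariance of {x ≤ K}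
  have hB : ∀ t ≥ t₀, x t ≤ K := by
    intro t₁ ht₁
    by_contra hgt
    push_neg at hgt
    have ht₀t₁ : t₀ < t₁ := by
      rcases lt_or_eq_of_le ht₁ with h | h
      · exact h
      · exfalso; rw [← h] at hgt; linarith
    set S : Set ℝ := Set.Icc t₀ t₁ ∩ x ⁻¹' Set.Iic K with hS
    have hScl : IsClosed S :=
      (hcont.mono (fun y hy => le_trans ht₀ hy.1)).preimage_isClosed_of_isClosed
        isClosed_Icc isClosed_Iic
    have hSne : S.Nonempty := ⟨t₀, ⟨le_rfl, ht₀t₁.le⟩, hxt₀⟩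
    have hSbdd : BddAbove S := ⟨t₁, fun y hy => hy.1.2⟩
    set u : ℝ := sSup S with hu
    have huS : u ∈ S := hScl.csSup_mem hSne hSbdd
    have hxu : x u ≤ K := huS.2
    have hut₁ : u < t₁ := lt_of_le_of_ne huS.1.2 (by
      intro h; rw [h] at hxu; linarith)
    have hu0 : (0:ℝ) ≤ u := le_trans ht₀ huS.1.1
    obtain ⟨ξ, hξ, hderiv⟩ := exists_hasDerivAt_eq_slope x f' hut₁
      (hcont.mono (fun y hy => le_trans hu0 hy.1))
      (fun y hy => hode y (le_trans hu0 hy.1.le))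
    have hxξ : K ≤ x ξ := by
      by_contra hlt
      push_neg at hlt
      have : ξ ∈ S := ⟨⟨le_trans huS.1.1 hξ.1.le, hξ.2.le⟩, hlt.le⟩
      have := le_csSup hSbdd this
      exact absurd hξ.1 (not_lt.mpr this)
    have hle : f' ξ ≤ -c := hkey ξ (le_trans hu0 hξ.1.le) hxξ
    rw [hderiv] at hle
    have hpos : 0 < (x t₁ - x u) / (t₁ - u) :=
      div_pos (by linarith) (by linarith)
    linarith
  refine eventually_atTop.2 ⟨t₀, fun t ht => ?_⟩
  have := hB t ht
  rw [hKdef, hMdef] at this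
  linarith
end

section
/- Let X be a normed space, X = X^u ⊕ X^{cs} with continuous projections P^u, P^{cs}, and let X_+ ⊆ X be a cone. Suppose there are η > 0 and a linear functional criterion such that every v ∈ X^{cs} satisfies ‖v⁻‖ ≥ η‖v‖ in a lattice norm, and let h^{cs} : X^{cs} → X^u satisfy ‖h^{cs}(w)‖ ≤ (η/2)‖w‖ for ‖w‖ ≤ δ. Then any v ≥ 0 of the form v = w + h^{cs}(w) with ‖w‖ = ‖P^{cs}v‖ ≤ δ must satisfy v = 0. -/
section SolidNorm

variable {α : Type*} [NormedAddCommGroup α] [Lattice α] [IsOrderedAddMonoid α] [HasSolidNorm α]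

lemma norm_negPart_le_norm_sub_of_nonneg {a b : α} (hb : 0 ≤ b) : ‖a⁻‖ ≤ ‖a - b‖ := by
  simpa [dist_eq_norm, negPart_eq_zero.mpr hb] using lipschitzWith_negPart.dist_le_mul a b

lemma eq_zero_of_norm_sub_nonneg_le {w v : α} {η c : ℝ} (hc : c < η)
    (hw : η * ‖w‖ ≤ ‖w⁻‖) (hv : 0 ≤ v) (hwv : ‖w - v‖ ≤ c * ‖w‖) : w = 0 := by
  have : η * ‖w‖ ≤ c * ‖w‖ := hw.trans <| (norm_negPart_le_norm_sub_of_nonneg hv).trans hwv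
  exact norm_le_zero_iff.mp (by nlinarith [norm_nonneg w])

end SolidNorm

theorem stmt_16_general {X : Type*} [NormedAddCommGroup X] [Lattice X] [IsOrderedAddMonoid X] [HasSolidNorm X] [NormedSpace ℝ X]
    (Xcs : Submodule ℝ X) (Pcs : X →L[ℝ] X)
    (η δ : ℝ) (hη : 0 < η)
    (hneg : ∀ v : X, v ∈ Xcs → η * ‖v‖ ≤ ‖v⁻‖)
    (hcs : X → X) (hcs0 : hcs 0 = 0)
    (hsmall : ∀ w : X, ‖w‖ ≤ δ → ‖hcs w‖ ≤ (η/2) * ‖w‖) :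
    ∀ v w : X, w ∈ Xcs → v = w + hcs w → Pcs v = w → 0 ≤ v → ‖w‖ ≤ δ → v = 0 := by
  intro v w hw hv _ hv0 hwδ
  have hwv : ‖w - v‖ ≤ η / 2 * ‖w‖ := by
    simpa [hv] using hsmall w hwδ
  have hw0 : w = 0 := eq_zero_of_norm_sub_nonneg_le (half_lt_self hη) (hneg w hw) hv0 hwv
  rw [hv, hw0, hcs0, add_zero]

theorem stmt_16 {X : Type*} [NormedAddCommGroup X] [Lattice X] [IsOrderedAddMonoid X] [HasSolidNorm X] [NormedSpace ℝ X]
    (Xcs : Submodule ℝ X) (Pu Pcs : X →L[ℝ] X)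
    (hsplit : ∀ x : X, Pu x + Pcs x = x)
    (hrange : ∀ x : X, Pcs x ∈ Xcs)
    (η δ : ℝ) (hη : 0 < η) (hδ : 0 < δ)
    (hneg : ∀ v : X, v ∈ Xcs → η * ‖v‖ ≤ ‖v⁻‖)
    (hcs : X → X) (hcs0 : hcs 0 = 0)
    (hsmall : ∀ w : X, ‖w‖ ≤ δ → ‖hcs w‖ ≤ (η/2) * ‖w‖) :
    ∀ v w : X, w ∈ Xcs → v = w + hcs w → Pcs v = w → 0 ≤ v → ‖w‖ ≤ δ → v = 0 :=
  stmt_16_general Xcs Pcs η δ hη hneg hcs hcs0 hsmall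
end

section
/- Let m : [0,∞) → ℝ≥0 be a bounded measurable solution of the renewal equation m(t) = e^{-νt}·f(t) + ∫₀^t ν e^{-νu} m(t-u) du, where ν > 0 and f : [0,∞) → ℝ≥0 is nondecreasing with ∫₀^∞ e^{-νt} f(t) dt < ∞. Then lim_{t→∞} m(t) = ν·∫₀^∞ e^{-νt} f(t) dt. -/
/-!
Multiplying the renewal equation by `e^{νt}` turns it into the Volterra equation
`h = f + ν ∫₀ᵗ h` for `h t = e^{νt} m t`. Its solution, obtained by differentiating
`e^{-νt} ∫₀ᵗ h` off the countably many discontinuities of the monotone `f`, gives the explicit form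
`m t = e^{-νt} f t + ν ∫₀ᵗ e^{-νs} f s ds` (the renewal measure of exponential inter-arrival times
is `δ₀ + ν · Lebesgue`). The first term tends to `0` because `f` is monotone and `e^{-νs} f s` is
integrable, and the second tends to `ν ∫₀^∞ e^{-νs} f s ds`.
-/

open Filter MeasureTheory Real Set Topology

theorem intervalIntegral_exp_kernel_comp_sub (ν t : ℝ) (m : ℝ → ℝ) :
    ∫ u in (0:ℝ)..t, ν * exp (-ν * u) * m (t - u)
      = ν * exp (-ν * t) * ∫ v in (0:ℝ)..t, exp (ν * v) * m v := by
  have hkernel : ∀ u, ν * exp (-ν * u) * m (t - u)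
      = ν * exp (-ν * t) * (exp (ν * (t - u)) * m (t - u)) := fun u => by
    have hsplit : exp (-ν * u) = exp (-ν * t) * exp (ν * (t - u)) := by
      rw [← exp_add]; ring_nf
    rw [hsplit]; ring
  simp_rw [hkernel]
  rw [intervalIntegral.integral_const_mul, intervalIntegral.integral_comp_sub_left
    (fun v => exp (ν * v) * m v), sub_self, sub_zero]

theorem hasDerivAt_intervalIntegral_of_mem_Ioo {g : ℝ → ℝ} {t x : ℝ}
    (hg : IntervalIntegrable g volume 0 t) (hx : x ∈ Ioo 0 t) (hgx : ContinuousAt g x) :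
    HasDerivAt (fun u => ∫ v in (0:ℝ)..u, g v) (g x) x := by
  have hsub : uIcc 0 x ⊆ uIcc 0 t := by
    rw [uIcc_of_le hx.1.le, uIcc_of_le (hx.1.trans hx.2).le]
    exact Icc_subset_Icc_right hx.2.le
  exact intervalIntegral.integral_hasDerivAt_right (hg.mono_set hsub)
    (AEStronglyMeasurable.stronglyMeasurableAtFilter_of_mem hg.1.aestronglyMeasurable
      (Ioc_mem_nhds hx.1 hx.2)) hgx

theorem exp_neg_mul_intervalIntegral_eq_of_eq_add_integral {h f : ℝ → ℝ} {ν t : ℝ} {S : Set ℝ}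
    (ht : 0 ≤ t) (hh : IntervalIntegrable h volume 0 t) (hf : IntervalIntegrable f volume 0 t)
    (hS : S.Countable) (hfc : ∀ x ∈ Ioo 0 t \ S, ContinuousAt f x)
    (heq : ∀ x ∈ Ioo 0 t, h x = f x + ν * ∫ v in (0:ℝ)..x, h v) :
    exp (-ν * t) * ∫ v in (0:ℝ)..t, h v = ∫ s in (0:ℝ)..t, exp (-ν * s) * f s := by
  -- the difference of the two sides, as functions of `t`, has derivative `0` off `S`
  set G : ℝ → ℝ := fun x => ∫ v in (0:ℝ)..x, h v
  set K : ℝ → ℝ := fun x => ∫ s in (0:ℝ)..x, exp (-ν * s) * f s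
  have hg : IntervalIntegrable (fun s => exp (-ν * s) * f s) volume 0 t :=
    hf.continuousOn_mul (by fun_prop)
  have hGc : ContinuousOn G (Icc 0 t) := by
    simpa only [uIcc_of_le ht] using
      intervalIntegral.continuousOn_primitive_interval' hh left_mem_uIcc
  have hKc : ContinuousOn K (Icc 0 t) := by
    simpa only [uIcc_of_le ht] using
      intervalIntegral.continuousOn_primitive_interval' hg left_mem_uIcc
  have hderiv : ∀ x ∈ Ioo 0 t \ S, HasDerivAt (fun x => exp (-ν * x) * G x - K x) 0 x := by
    rintro x ⟨hx, hxS⟩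
    have hfx := hfc x ⟨hx, hxS⟩
    have hhx : ContinuousAt h x := by
      refine (hfx.add ((hGc.continuousAt (Icc_mem_nhds hx.1 hx.2)).const_mul ν)).congr ?_
      filter_upwards [Ioo_mem_nhds hx.1 hx.2] with y hy using (heq y hy).symm
    have hexp : HasDerivAt (fun x => exp (-ν * x)) (-ν * exp (-ν * x)) x := by
      simpa [mul_comm] using ((hasDerivAt_id x).const_mul (-ν)).exp
    refine ((hexp.mul (hasDerivAt_intervalIntegral_of_mem_Ioo hh hx hhx)).sub
      (hasDerivAt_intervalIntegral_of_mem_Ioo hg hx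
        ((continuous_exp.comp (continuous_const_mul (-ν))).continuousAt.mul hfx))).congr_deriv ?_
    rw [heq x hx]
    ring
  have hDc : ContinuousOn (fun x => exp (-ν * x) * G x - K x) (Icc 0 t) :=
    ((continuous_exp.comp (continuous_const_mul (-ν))).continuousOn.mul hGc).sub hKc
  have hD := integral_eq_of_hasDerivAt_off_countable_of_le _ (fun _ => (0:ℝ)) ht hS hDc
    hderiv intervalIntegrable_const
  simp only [intervalIntegral.integral_zero, intervalIntegral.integral_same, G, K] at hD
  linarith

theorem renewal_exp_eq_add_intervalIntegral {m f : ℝ → ℝ} {ν t : ℝ} {S : Set ℝ}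
    (ht : 0 ≤ t) (hm : IntervalIntegrable m volume 0 t) (hf : IntervalIntegrable f volume 0 t)
    (hS : S.Countable) (hfc : ∀ x ∈ Ioo 0 t \ S, ContinuousAt f x)
    (hren : ∀ s ∈ Icc 0 t,
      m s = exp (-ν * s) * f s + ∫ u in (0:ℝ)..s, ν * exp (-ν * u) * m (s - u)) :
    m t = exp (-ν * t) * f t + ν * ∫ s in (0:ℝ)..t, exp (-ν * s) * f s := by
  have hexp : ∀ s, exp (ν * s) * exp (-ν * s) = 1 := fun s => by rw [← exp_add]; simp
  have hmul : ∀ s ∈ Icc 0 t,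
      exp (ν * s) * m s = f s + ν * ∫ v in (0:ℝ)..s, exp (ν * v) * m v := fun s hs => by
    rw [hren s hs, intervalIntegral_exp_kernel_comp_sub]
    linear_combination (f s + ν * ∫ v in (0:ℝ)..s, exp (ν * v) * m v) * hexp s
  have key := exp_neg_mul_intervalIntegral_eq_of_eq_add_integral ht
    (hm.continuousOn_mul (by fun_prop)) hf hS hfc fun x hx => hmul x (Ioo_subset_Icc_self hx)
  rw [← key]
  linear_combination exp (-ν * t) * hmul t ⟨ht, le_rfl⟩ - m t * hexp t

theorem tendsto_exp_neg_mul_mul_zero_of_monotoneOn {f : ℝ → ℝ} {ν : ℝ} (hν : 0 ≤ ν)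
    (hfnn : ∀ t ≥ 0, 0 ≤ f t) (hfmono : MonotoneOn f (Ici 0))
    (hfint : IntegrableOn (fun t => exp (-ν * t) * f t) (Ioi 0)) :
    Tendsto (fun t => exp (-ν * t) * f t) atTop (𝓝 0) := by
  have hii : ∀ a b, 0 ≤ a → a ≤ b →
      IntervalIntegrable (fun s => exp (-ν * s) * f s) volume a b := fun a b ha hab =>
    (intervalIntegrable_iff_integrableOn_Ioc_of_le hab).2
      (hfint.mono_set fun x hx => ha.trans_lt hx.1)
  have hwindow : Tendsto (fun t => ∫ s in t..t + 1, exp (-ν * s) * f s) atTop (𝓝 0) := by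
    have hprim := intervalIntegral_tendsto_integral_Ioi 0 hfint tendsto_id
    have := (hprim.comp (tendsto_atTop_add_const_right atTop 1 tendsto_id)).sub hprim
    simp only [Function.comp_def, id, sub_self] at this
    refine this.congr' ?_
    filter_upwards [eventually_ge_atTop 0] with t ht
    exact intervalIntegral.integral_interval_sub_left (hii 0 _ le_rfl (by linarith))
      (hii 0 t le_rfl ht)
  have hbound : ∀ t ≥ 0, exp (-ν * t) * f t ≤ exp ν * ∫ s in t..t + 1, exp (-ν * s) * f s := by
    intro t ht
    have hlow : exp (-ν * (t + 1)) * f t ≤ ∫ s in t..t + 1, exp (-ν * s) * f s := by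
      simpa using intervalIntegral.integral_mono_on (by linarith) intervalIntegrable_const
        (hii t (t + 1) ht (by linarith)) fun s hs =>
          mul_le_mul (exp_le_exp.2 (by nlinarith [hs.2])) (hfmono ht (ht.trans hs.1) hs.1)
            (hfnn t ht) (exp_pos _).le
    calc exp (-ν * t) * f t = exp ν * (exp (-ν * (t + 1)) * f t) := by
          rw [← mul_assoc, ← exp_add]; ring_nf
      _ ≤ _ := mul_le_mul_of_nonneg_left hlow (exp_pos ν).le
  refine tendsto_of_tendsto_of_tendsto_of_le_of_le' tendsto_const_nhds
    (by simpa only [mul_zero] using hwindow.const_mul (exp ν)) ?_ ?_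
  · filter_upwards [eventually_ge_atTop 0] with t ht using mul_nonneg (exp_pos _).le (hfnn t ht)
  · filter_upwards [eventually_ge_atTop 0] with t ht using hbound t ht

theorem intervalIntegrable_of_nonneg_of_le {m : ℝ → ℝ} {M t : ℝ} (hmmeas : Measurable m)
    (hmnn : ∀ t ≥ 0, 0 ≤ m t) (hM : ∀ t ≥ 0, m t ≤ M) (ht : 0 ≤ t) :
    IntervalIntegrable m volume 0 t := by
  refine (intervalIntegrable_const (c := M)).mono_fun hmmeas.aestronglyMeasurable ?_
  rw [uIoc_of_le ht]
  filter_upwards [ae_restrict_mem measurableSet_Ioc] with x hx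
  rw [norm_of_nonneg (hmnn x hx.1.le), norm_of_nonneg ((hmnn x hx.1.le).trans (hM x hx.1.le))]
  exact hM x hx.1.le

theorem stmt_19 (m f : ℝ → ℝ) (ν : ℝ) (hν : 0 < ν)
    (hmmeas : Measurable m) (hmnn : ∀ t ≥ (0:ℝ), 0 ≤ m t)
    (hmbdd : ∃ M : ℝ, ∀ t ≥ (0:ℝ), m t ≤ M)
    (hfnn : ∀ t ≥ (0:ℝ), 0 ≤ f t) (hfmono : MonotoneOn f (Set.Ici (0:ℝ)))
    (hfint : IntegrableOn (fun t => Real.exp (-ν * t) * f t) (Set.Ici (0:ℝ)))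
    (hren : ∀ t ≥ (0:ℝ),
      m t = Real.exp (-ν * t) * f t + ∫ u in (0:ℝ)..t, ν * Real.exp (-ν * u) * m (t - u)) :
    Tendsto m atTop (nhds (ν * ∫ t in Set.Ioi (0:ℝ), Real.exp (-ν * t) * f t)) := by
  obtain ⟨M, hM⟩ := hmbdd
  have hfint' := hfint.mono_set Ioi_subset_Ici_self
  have hfc : ∀ t, ∀ x ∈ Ioo 0 t \ {x ∈ Ici 0 | ¬ContinuousWithinAt f (Ici 0) x},
      ContinuousAt f x := fun t x ⟨hx, hxS⟩ =>
    (continuousWithinAt_iff_continuousAt (Ici_mem_nhds hx.1)).1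
      (not_not.1 fun h => hxS ⟨hx.1.le, h⟩)
  have hsol : ∀ t ≥ 0, m t = exp (-ν * t) * f t + ν * ∫ s in (0:ℝ)..t, exp (-ν * s) * f s :=
    fun t ht => renewal_exp_eq_add_intervalIntegral ht
      (intervalIntegrable_of_nonneg_of_le hmmeas hmnn hM ht)
      ((hfmono.mono fun x hx => by rw [uIcc_of_le ht] at hx; exact hx.1).intervalIntegrable)
      hfmono.countable_not_continuousWithinAt (hfc t) fun s hs => hren s hs.1
  have hlim := (tendsto_exp_neg_mul_mul_zero_of_monotoneOn hν.le hfnn hfmono hfint').add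
    ((intervalIntegral_tendsto_integral_Ioi 0 hfint' tendsto_id).const_mul ν)
  rw [zero_add] at hlim
  exact hlim.congr' (by filter_upwards [eventually_ge_atTop 0] with t ht using (hsol t ht).symm)
end
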